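/- For any word X over the alphabet Ψ: if the image of X·t in the algebra H is 0, then the image of X in H is 0; and if the image of s·X in H is 0, then the image of X in H is 0. -/

import Mathlib

noncomputable section

/-- Direction of the head movement of the Turing machine. -/
inductive Dir
  | L
  | R
deriving DecidableEq

/-- The instruction table of Minsky's universal Turing machine: for a state `i` and a color `j`,
`instr i j` is `some (d, q, p)` where `d` is the direction of the head movement, `q` the new
state and `p` the new color of the current cell; it is `none` exactly for the STOP pair
`(4, 3)`. -/
def instr : Fin 7 → Fin 4 → Option (Dir × Fin 7 × Fin 4) := fun i j =>
  match i.val, j.val with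
  | 0, 0 => some (Dir.L, 4, 1)
  | 0, 1 => some (Dir.L, 1, 3)
  | 0, 2 => some (Dir.R, 0, 0)
  | 0, 3 => some (Dir.R, 0, 1)
  | 1, 0 => some (Dir.L, 1, 2)
  | 1, 1 => some (Dir.L, 1, 3)
  | 1, 2 => some (Dir.R, 0, 0)
  | 1, 3 => some (Dir.L, 1, 3)
  | 2, 0 => some (Dir.R, 2, 2)
  | 2, 1 => some (Dir.R, 2, 1)
  | 2, 2 => some (Dir.R, 2, 0)
  | 2, 3 => some (Dir.L, 4, 1)
  | 3, 0 => some (Dir.R, 3, 2)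
  | 3, 1 => some (Dir.R, 3, 1)
  | 3, 2 => some (Dir.R, 3, 0)
  | 3, 3 => some (Dir.L, 4, 0)
  | 4, 0 => some (Dir.L, 5, 2)
  | 4, 1 => some (Dir.L, 4, 1)
  | 4, 2 => some (Dir.L, 4, 0)
  | 4, 3 => none
  | 5, 0 => some (Dir.L, 5, 2)
  | 5, 1 => some (Dir.L, 5, 1)
  | 5, 2 => some (Dir.L, 6, 2)
  | 5, 3 => some (Dir.R, 2, 1)
  | 6, 0 => some (Dir.R, 0, 3)
  | 6, 1 => some (Dir.R, 6, 3)
  | 6, 2 => some (Dir.R, 6, 2)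
  | 6, 3 => some (Dir.R, 3, 1)
  | _, _ => none

/-- The alphabet `Ψ = {t, s, a_0, …, a_3, Q_0, …, Q_6, P_0, …, P_3, L, R}`. -/
inductive Psi
  | t
  | s
  | a (k : Fin 4)
  | Q (i : Fin 7)
  | P (j : Fin 4)
  | L
  | R
deriving DecidableEq, Fintype

/-- The image in the free algebra of a word over the alphabet `Ψ`. -/
def wrd (K : Type*) [Field K] (l : List Psi) : FreeAlgebra K Psi :=
  (l.map (FreeAlgebra.ι K)).prod

open Psi in
/-- The defining relations of the algebra `H`. -/
inductive HRel (K : Type*) [Field K] : FreeAlgebra K Psi → FreeAlgebra K Psi → Prop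
  | rel1 (k : Fin 4) :
      HRel K (wrd K [t, L, a k]) (wrd K [L, t, a k])
  | rel2 (k l : Fin 4) :
      HRel K (wrd K [t, a k, a l]) (wrd K [a k, t, a l])
  | rel9 :
      HRel K (wrd K [s, R]) (wrd K [R, s])
  | rel8 (k : Fin 4) :
      HRel K (wrd K [s, a k]) (wrd K [a k, s])
  | rel3 (i : Fin 7) (j : Fin 4) (q : Fin 7) (p : Fin 4) (k : Fin 4)
      (h : instr i j = some (Dir.L, q, p)) :
      HRel K (wrd K [t, a k, Q i, P j]) (wrd K [Q q, P k, a p, s])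
  | rel5 (i : Fin 7) (j : Fin 4) (q : Fin 7) (p : Fin 4)
      (h : instr i j = some (Dir.L, q, p)) :
      HRel K (wrd K [t, L, Q i, P j]) (wrd K [L, Q q, P 0, a p, s])
  | rel4 (i : Fin 7) (j : Fin 4) (q : Fin 7) (p : Fin 4) (l k : Fin 4)
      (h : instr i j = some (Dir.R, q, p)) :
      HRel K (wrd K [t, a l, Q i, P j, a k]) (wrd K [a l, a p, Q q, P k, s])
  | rel4b (i : Fin 7) (j : Fin 4) (q : Fin 7) (p : Fin 4) (k : Fin 4)
      (h : instr i j = some (Dir.R, q, p)) :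
      HRel K (wrd K [t, L, Q i, P j, a k]) (wrd K [L, a p, Q q, P k, s])
  | rel6 (i : Fin 7) (j : Fin 4) (q : Fin 7) (p : Fin 4) (l : Fin 4)
      (h : instr i j = some (Dir.R, q, p)) :
      HRel K (wrd K [t, a l, Q i, P j, R]) (wrd K [a l, a p, Q q, P 0, R, s])
  | rel6b (i : Fin 7) (j : Fin 4) (q : Fin 7) (p : Fin 4)
      (h : instr i j = some (Dir.R, q, p)) :
      HRel K (wrd K [t, L, Q i, P j, R]) (wrd K [L, a p, Q q, P 0, R, s])
  | rel7 :
      HRel K (wrd K [Q 4, P 3]) 0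

/-- The algebra `H`: the quotient of the free associative unital `K`-algebra on `Ψ` by the
two-sided ideal generated by the defining relations. -/
abbrev AlgH (K : Type*) [Field K] := RingQuot (HRel K)

/-- The image in `H` of a word over the alphabet `Ψ`. -/
def mkw (K : Type*) [Field K] (l : List Psi) : AlgH K :=
  RingQuot.mkAlgHom K (HRel K) (wrd K l)

/-- The image of the letter `t` in `H`. -/
def tEl (K : Type*) [Field K] : AlgH K := mkw K [Psi.t]

/-- The image of the letter `s` in `H`. -/
def sEl (K : Type*) [Field K] : AlgH K := mkw K [Psi.s]

/-!
Both cancellations come from twisted derivations of `H`, packaged as algebra homomorphisms into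
upper triangular `2 × 2` matrices over `H`. For `t`, take `x ↦ !![x, ∂ₜx; 0, ε x]` with
`∂ₜ t = 1` and `∂ₜ c = 0` on the other letters, so that `∂ₜ` deletes a final `t`; it respects the
relations because no side of a relation ends in `t`, and `∂ₜ(X t) = X`. For `s`, take
`x ↦ !![π x, ∂ₛx; 0, x]`, where `π` keeps the letters `a k` and `R` and kills the others, and
`∂ₛ s = 1`; then `∂ₛ` deletes the first `s` of a word all of whose earlier letters commute with
`s`, which is exactly what makes it compatible with `s a_k = a_k s` and `s R = R s`, and
`∂ₛ(s X) = X`.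
-/

namespace AlgH

open Psi

variable {K : Type*} [Field K]

lemma mkw_append (u v : List Psi) : mkw K (u ++ v) = mkw K u * mkw K v := by
  simp [mkw, wrd]

lemma mkw_cons (c : Psi) (l : List Psi) : mkw K (c :: l) = mkw K [c] * mkw K l :=
  mkw_append [c] l

def tDerivGen (K : Type*) [Field K] : Psi → Matrix (Fin 2) (Fin 2) (AlgH K)
  | t => !![mkw K [t], 1; 0, 0]
  | c => !![mkw K [c], 0; 0, 0]

def sDerivGen (K : Type*) [Field K] : Psi → Matrix (Fin 2) (Fin 2) (AlgH K)
  | s => !![0, 1; 0, mkw K [s]]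
  | a k => !![mkw K [a k], 0; 0, mkw K [a k]]
  | R => !![mkw K [R], 0; 0, mkw K [R]]
  | c => !![0, 0; 0, mkw K [c]]

lemma lift_tDerivGen_eq_of_hRel ⦃x y : FreeAlgebra K Psi⦄ (h : HRel K x y) :
    FreeAlgebra.lift K (tDerivGen K) x = FreeAlgebra.lift K (tDerivGen K) y := by
  have hH := RingQuot.mkAlgHom_rel K h
  cases h <;> simp [wrd, tDerivGen, mkw] at hH ⊢ <;>
    simp [hH, ← Matrix.ext_iff, Fin.forall_fin_two]

lemma lift_sDerivGen_eq_of_hRel ⦃x y : FreeAlgebra K Psi⦄ (h : HRel K x y) :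
    FreeAlgebra.lift K (sDerivGen K) x = FreeAlgebra.lift K (sDerivGen K) y := by
  have hH := RingQuot.mkAlgHom_rel K h
  cases h <;> simp [wrd, sDerivGen, mkw] at hH ⊢ <;>
    simp [hH, ← Matrix.ext_iff, Fin.forall_fin_two]

def tDerivMatrix (K : Type*) [Field K] : AlgH K →ₐ[K] Matrix (Fin 2) (Fin 2) (AlgH K) :=
  RingQuot.liftAlgHom K ⟨FreeAlgebra.lift K (tDerivGen K), lift_tDerivGen_eq_of_hRel⟩

def sDerivMatrix (K : Type*) [Field K] : AlgH K →ₐ[K] Matrix (Fin 2) (Fin 2) (AlgH K) :=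
  RingQuot.liftAlgHom K ⟨FreeAlgebra.lift K (sDerivGen K), lift_sDerivGen_eq_of_hRel⟩

lemma tDerivMatrix_mkw_singleton (c : Psi) : tDerivMatrix K (mkw K [c]) = tDerivGen K c := by
  simp [tDerivMatrix, mkw, wrd]

lemma sDerivMatrix_mkw_singleton (c : Psi) : sDerivMatrix K (mkw K [c]) = sDerivGen K c := by
  simp [sDerivMatrix, mkw, wrd]

lemma tDerivMatrix_mkw_col_zero (X : List Psi) :
    tDerivMatrix K (mkw K X) 0 0 = mkw K X ∧ tDerivMatrix K (mkw K X) 1 0 = 0 := by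
  induction X with
  | nil => simp [mkw, wrd]
  | cons c X ih =>
    rw [mkw_cons, map_mul, tDerivMatrix_mkw_singleton]
    cases c <;> simp [tDerivGen, Matrix.mul_apply, ih.1, ih.2]

lemma sDerivMatrix_mkw_row_one (X : List Psi) :
    sDerivMatrix K (mkw K X) 1 1 = mkw K X ∧ sDerivMatrix K (mkw K X) 1 0 = 0 := by
  induction X with
  | nil => simp [mkw, wrd]
  | cons c X ih =>
    rw [mkw_cons, map_mul, sDerivMatrix_mkw_singleton]
    cases c <;> simp [sDerivGen, Matrix.mul_apply, ih.1, ih.2]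

lemma tDerivMatrix_mkw_append_t (X : List Psi) :
    tDerivMatrix K (mkw K (X ++ [t])) 0 1 = mkw K X := by
  rw [mkw_append, map_mul, tDerivMatrix_mkw_singleton, Matrix.mul_apply, Fin.sum_univ_two,
    (tDerivMatrix_mkw_col_zero X).1]
  simp [tDerivGen]

lemma sDerivMatrix_mkw_s_cons (X : List Psi) :
    sDerivMatrix K (mkw K (s :: X)) 0 1 = mkw K X := by
  rw [mkw_cons, map_mul, sDerivMatrix_mkw_singleton, Matrix.mul_apply, Fin.sum_univ_two,
    (sDerivMatrix_mkw_row_one X).1]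
  simp [sDerivGen]

end AlgH

/-- For any word `X` over `Ψ`: if the image of `X·t` in `H` is `0` then the
image of `X` in `H` is `0`; and if the image of `s·X` in `H` is `0` then the image of `X` in
`H` is `0`. -/
theorem cancel_t_right_s_left (K : Type*) [Field K] (X : List Psi) :
    (mkw K (X ++ [Psi.t]) = 0 → mkw K X = 0) ∧
    (mkw K (Psi.s :: X) = 0 → mkw K X = 0) := by
  refine ⟨fun h => ?_, fun h => ?_⟩
  · rw [← AlgH.tDerivMatrix_mkw_append_t, h, map_zero, Matrix.zero_apply]
  · rw [← AlgH.sDerivMatrix_mkw_s_cons, h, map_zero, Matrix.zero_apply]
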